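/- Let (ξ₁, ξ₂) ~ N((πβ, π)', Σ) with Σ fixed and positive definite. Define β̂_U = τ̂(ξ₂,σ₂²)(ξ₁ − (σ₁₂/σ₂²)ξ₂) + σ₁₂/σ₂² and β̂_{2SLS} = ξ₁/ξ₂. Then as π → ∞ (with β, Σ fixed), π·(β̂_U − β̂_{2SLS}) → 0 in probability. -/

import Mathlib

open MeasureTheory ProbabilityTheory Filter

/-- Standard normal density `φ`. -/
noncomputable def stdPDF (x : ℝ) : ℝ :=
  (Real.sqrt (2 * Real.pi))⁻¹ * Real.exp (-(x ^ 2) / 2)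

/-- Standard normal CDF `Φ`. -/
noncomputable def stdCDF (x : ℝ) : ℝ := ∫ t in Set.Iic x, stdPDF t

/-- Mills-ratio estimator `τ̂(x, σ²) = (1/σ)(1 − Φ(x/σ))/φ(x/σ)`. -/
noncomputable def millsTau (σ x : ℝ) : ℝ :=
  (1 / σ) * (1 - stdCDF (x / σ)) / stdPDF (x / σ)

/-!
The convergence holds for every fixed `ω`, hence in probability. With `c = σ₁₂/σ₂²`, algebra
gives `β̂_U - β̂_2SLS = (ξ₁ - c ξ₂)(τ̂(ξ₂) - 1/ξ₂)`, where `ξ₁ - c ξ₂ = (β - c)π + O(1)` and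
`ξ₂ = π + O(1)`.
Integrating `(s - t) φ(s) ≥ 0` and `(s - t)² φ(s) ≥ 0` over `s > t` gives the Gaussian tail bounds
`1/t - 1/t³ ≤ (1 - Φ(t))/φ(t) ≤ 1/t` for `t > 0`, so `τ̂(x) = 1/x + O(σ₂²/x³)`, and therefore
`π (β̂_U - β̂_2SLS) = O(π · π · π⁻³) → 0`.
-/

open Set Asymptotics Topology

lemma stdPDF_pos (x : ℝ) : 0 < stdPDF x := by
  unfold stdPDF; positivity

lemma continuous_stdPDF : Continuous stdPDF := by
  unfold stdPDF; fun_prop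

lemma hasDerivAt_stdPDF (x : ℝ) : HasDerivAt stdPDF (-x * stdPDF x) x := by
  have h := (((hasDerivAt_pow 2 x).neg.div_const 2).exp).const_mul (Real.sqrt (2 * Real.pi))⁻¹
  exact (show HasDerivAt stdPDF _ x from h).congr_deriv
    (by simp only [stdPDF, Pi.neg_apply]; push_cast; ring)

lemma integrable_pow_mul_stdPDF (n : ℕ) : Integrable fun x => x ^ n * stdPDF x := by
  have h := (integrable_rpow_mul_exp_neg_mul_sq (b := 1 / 2) (by norm_num) (s := n)
    (by linarith [n.cast_nonneg (α := ℝ)])).const_mul (Real.sqrt (2 * Real.pi))⁻¹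
  refine h.congr (Eventually.of_forall fun x => ?_)
  simp only [Real.rpow_natCast, stdPDF]
  ring_nf

lemma integrable_stdPDF : Integrable stdPDF := by
  simpa using integrable_pow_mul_stdPDF 0

lemma integrable_mul_stdPDF : Integrable fun x => x * stdPDF x := by
  simpa using integrable_pow_mul_stdPDF 1

lemma stdPDF_eq_gaussianPDFReal : stdPDF = gaussianPDFReal 0 1 := by
  ext x; simp [stdPDF, gaussianPDFReal]

lemma integral_stdPDF : ∫ x, stdPDF x = 1 := by
  rw [stdPDF_eq_gaussianPDFReal, integral_gaussianPDFReal_eq_one 0 one_ne_zero]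

lemma monotone_stdCDF : Monotone stdCDF := fun _ _ hxy =>
  setIntegral_mono_set integrable_stdPDF.integrableOn
    (Eventually.of_forall fun s => (stdPDF_pos s).le) (Iic_subset_Iic.mpr hxy).eventuallyLE

lemma tendsto_pow_mul_stdPDF_atTop (n : ℕ) :
    Tendsto (fun x => x ^ n * stdPDF x) atTop (𝓝 0) := by
  have hexp : Tendsto (fun x : ℝ => Real.exp (-(1 / 2) * x)) atTop (𝓝 0) :=
    Real.tendsto_exp_atBot.comp (tendsto_id.const_mul_atTop_of_neg (by norm_num))
  refine (((rpow_mul_exp_neg_mul_sq_isLittleO_exp_neg (b := 1 / 2) (by norm_num) n).const_mul_left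
    (Real.sqrt (2 * Real.pi))⁻¹).isBigO.trans_tendsto hexp).congr fun x => ?_
  simp only [Real.rpow_natCast, stdPDF]
  ring_nf

lemma one_sub_stdCDF_eq_integral_Ioi (t : ℝ) : 1 - stdCDF t = ∫ s in Ioi t, stdPDF s := by
  have h := intervalIntegral.integral_Iic_add_Ioi (b := t) integrable_stdPDF.integrableOn
    integrable_stdPDF.integrableOn
  rw [integral_stdPDF] at h
  rw [stdCDF]
  linarith

lemma integral_Ioi_mul_stdPDF (t : ℝ) : ∫ s in Ioi t, s * stdPDF s = stdPDF t := by
  have h := integral_Ioi_of_hasDerivAt_of_tendsto' (f := fun s => -stdPDF s) (a := t)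
    (fun x _ => (hasDerivAt_stdPDF x).neg) (by simpa using integrable_mul_stdPDF.integrableOn)
    (by simpa using (tendsto_pow_mul_stdPDF_atTop 0).neg)
  simpa using h

lemma integral_Ioi_sq_mul_stdPDF (t : ℝ) :
    ∫ s in Ioi t, s ^ 2 * stdPDF s = t * stdPDF t + (1 - stdCDF t) := by
  have hderiv : ∀ x ∈ Ici t, HasDerivAt (fun s => -(s * stdPDF s))
      (x ^ 2 * stdPDF x - stdPDF x) x := fun x _ =>
    ((hasDerivAt_id x).mul (hasDerivAt_stdPDF x)).neg.congr_deriv (by rw [id_eq]; ring)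
  have h := integral_Ioi_of_hasDerivAt_of_tendsto' hderiv
    ((integrable_pow_mul_stdPDF 2).sub integrable_stdPDF).integrableOn
    (by simpa using (tendsto_pow_mul_stdPDF_atTop 1).neg)
  rw [integral_sub (integrable_pow_mul_stdPDF 2).integrableOn integrable_stdPDF.integrableOn,
    ← one_sub_stdCDF_eq_integral_Ioi] at h
  linarith

lemma mul_one_sub_stdCDF_le (t : ℝ) : t * (1 - stdCDF t) ≤ stdPDF t := by
  have hpos : 0 ≤ ∫ s in Ioi t, (s - t) * stdPDF s :=
    setIntegral_nonneg measurableSet_Ioi fun s hs =>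
      mul_nonneg (sub_nonneg.mpr (le_of_lt hs)) (stdPDF_pos s).le
  have heq : ∫ s in Ioi t, (s - t) * stdPDF s = stdPDF t - t * (1 - stdCDF t) := by
    simp_rw [sub_mul]
    rw [integral_sub integrable_mul_stdPDF.integrableOn
      (integrable_stdPDF.const_mul t).integrableOn, integral_const_mul,
      integral_Ioi_mul_stdPDF, one_sub_stdCDF_eq_integral_Ioi]
  linarith

lemma mul_stdPDF_le (t : ℝ) : t * stdPDF t ≤ (1 + t ^ 2) * (1 - stdCDF t) := by
  have hpos : 0 ≤ ∫ s in Ioi t, (s - t) ^ 2 * stdPDF s :=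
    setIntegral_nonneg measurableSet_Ioi fun s _ => mul_nonneg (sq_nonneg _) (stdPDF_pos s).le
  have heq : ∫ s in Ioi t, (s - t) ^ 2 * stdPDF s
      = (1 + t ^ 2) * (1 - stdCDF t) - t * stdPDF t := by
    have hexp : ∀ s, (s - t) ^ 2 * stdPDF s
        = s ^ 2 * stdPDF s - (2 * t) * (s * stdPDF s) + t ^ 2 * stdPDF s := fun s => by ring
    have h2 := integrable_pow_mul_stdPDF 2
    have h1 := integrable_mul_stdPDF.const_mul (2 * t)
    simp_rw [hexp]
    rw [integral_add (h2.sub' h1).integrableOn (integrable_stdPDF.const_mul _).integrableOn,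
      integral_sub h2.integrableOn h1.integrableOn,
      integral_const_mul, integral_const_mul, integral_Ioi_sq_mul_stdPDF,
      integral_Ioi_mul_stdPDF, ← one_sub_stdCDF_eq_integral_Ioi]
    ring
  linarith

noncomputable def millsRatio (t : ℝ) : ℝ := (1 - stdCDF t) / stdPDF t

lemma millsTau_eq_inv_mul_millsRatio (σ x : ℝ) : millsTau σ x = σ⁻¹ * millsRatio (x / σ) := by
  rw [millsTau, millsRatio, one_div, mul_div_assoc]

lemma millsRatio_le_inv {t : ℝ} (ht : 0 < t) : millsRatio t ≤ t⁻¹ := by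
  rw [millsRatio, div_le_iff₀ (stdPDF_pos t), inv_mul_eq_div, le_div_iff₀ ht]
  linarith [mul_one_sub_stdCDF_le t]

lemma inv_sub_inv_pow_three_le_millsRatio {t : ℝ} (ht : 0 < t) :
    t⁻¹ - (t ^ 3)⁻¹ ≤ millsRatio t :=
  calc t⁻¹ - (t ^ 3)⁻¹ ≤ t / (1 + t ^ 2) := by
        rw [← sub_nonneg]
        have hgap : t / (1 + t ^ 2) - (t⁻¹ - (t ^ 3)⁻¹) = (t ^ 3 * (1 + t ^ 2))⁻¹ := by
          field_simp; ring
        rw [hgap]; positivity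
    _ ≤ millsRatio t := by
        rw [millsRatio, div_le_div_iff₀ (by positivity) (stdPDF_pos t)]
        linarith [mul_stdPDF_le t]

lemma abs_millsRatio_sub_inv_le {t : ℝ} (ht : 0 < t) : |millsRatio t - t⁻¹| ≤ (t ^ 3)⁻¹ := by
  have h3 : 0 ≤ (t ^ 3)⁻¹ := by positivity
  rw [abs_sub_le_iff]
  constructor
  · linarith [millsRatio_le_inv ht]
  · linarith [inv_sub_inv_pow_three_le_millsRatio ht]

lemma abs_millsTau_sub_inv_le {σ x : ℝ} (hσ : 0 < σ) (hx : 0 < x) :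
    |millsTau σ x - x⁻¹| ≤ σ ^ 2 / x ^ 3 :=
  calc |millsTau σ x - x⁻¹| = σ⁻¹ * |millsRatio (x / σ) - (x / σ)⁻¹| := by
        have h : millsTau σ x - x⁻¹ = σ⁻¹ * (millsRatio (x / σ) - (x / σ)⁻¹) := by
          rw [millsTau_eq_inv_mul_millsRatio]; field_simp
        rw [h, abs_mul, abs_of_pos (inv_pos.2 hσ)]
    _ ≤ σ⁻¹ * ((x / σ) ^ 3)⁻¹ := by gcongr; exact abs_millsRatio_sub_inv_le (div_pos hx hσ)
    _ = σ ^ 2 / x ^ 3 := by field_simp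

lemma isBigO_millsTau_sub_inv {σ : ℝ} (hσ : 0 < σ) :
    (fun x => millsTau σ x - x⁻¹) =O[atTop] fun x => (x ^ 3)⁻¹ := by
  refine IsBigO.of_bound (σ ^ 2) ?_
  filter_upwards [eventually_gt_atTop 0] with x hx
  rw [Real.norm_eq_abs, norm_inv, norm_pow, Real.norm_of_nonneg hx.le, ← div_eq_mul_inv]
  exact abs_millsTau_sub_inv_le hσ hx

lemma tendsto_mul_millsTau_sub_inv {σ : ℝ} (hσ : 0 < σ) (a b d : ℝ) :
    Tendsto (fun x => (x - a) * (b * x + d) * (millsTau σ x - x⁻¹)) atTop (𝓝 0) := by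
  have hsub : (fun x => x - a) =O[atTop] id :=
    (isBigO_refl id atTop).sub (isLittleO_const_id_atTop a).isBigO
  have hlin : (fun x => b * x + d) =O[atTop] id :=
    ((isBigO_refl id atTop).const_mul_left b).add (isLittleO_const_id_atTop d).isBigO
  have hprod := (hsub.mul hlin).mul (isBigO_millsTau_sub_inv hσ)
  refine hprod.trans_tendsto (tendsto_inv_atTop_zero.congr' ?_)
  filter_upwards [eventually_ne_atTop 0] with x hx
  simp only [id]
  field_simp

@[fun_prop]
lemma measurable_millsTau (σ : ℝ) : Measurable (millsTau σ) := by
  have hdiv : Measurable fun x : ℝ => x / σ := measurable_id.div_const σ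
  exact (measurable_const.mul (measurable_const.sub (monotone_stdCDF.measurable.comp hdiv))).div
    (continuous_stdPDF.measurable.comp hdiv)

lemma mul_sub_add_sub_div_eq {τ y₁ y₂ : ℝ} (c : ℝ) (h : y₂ ≠ 0) :
    τ * (y₁ - c * y₂) + c - y₁ / y₂ = (y₁ - c * y₂) * (τ - y₂⁻¹) := by
  field_simp
  ring

lemma tendsto_measure_le_abs_of_ae_tendsto {ι Ω : Type*} {l : Filter ι} [l.IsCountablyGenerated]
    [MeasurableSpace Ω] {P : Measure Ω} [IsFiniteMeasure P] {X : ι → Ω → ℝ}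
    (hX : ∀ i, AEStronglyMeasurable (X i) P) (hlim : ∀ᵐ ω ∂P, Tendsto (X · ω) l (𝓝 0))
    {ε : ℝ} (hε : 0 < ε) : Tendsto (fun i => P {ω | ε ≤ |X i ω|}) l (𝓝 0) := by
  refine tendsto_iff_seq_tendsto.mpr fun u hu => ?_
  have hconv : TendstoInMeasure P (fun n => X (u n)) atTop fun _ => 0 :=
    tendstoInMeasure_of_tendsto_ae (fun n => hX (u n))
      (hlim.mono fun ω hω => hω.comp hu)
  refine (hconv (ENNReal.ofReal ε) (ENNReal.ofReal_pos.mpr hε)).congr fun n => ?_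
  simp only [Function.comp, edist_dist, Real.dist_eq, sub_zero,
    ENNReal.ofReal_le_ofReal_iff (abs_nonneg _)]

theorem stmt9_general {Ω : Type*} [MeasurableSpace Ω] (P : Measure Ω) [IsProbabilityMeasure P]
    (Z₁ Z₂ : Ω → ℝ) (hm₁ : Measurable Z₁) (hm₂ : Measurable Z₂)
    (β σ₁ σ₁₂ σ₂ : ℝ) (hσ₂ : 0 < σ₂)
    (ξ₁ : ℝ → Ω → ℝ) (ξ₂ : ℝ → Ω → ℝ)
    (hξ₂ : ∀ π, ξ₂ π = fun ω => π + σ₂ * Z₂ ω)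
    (hξ₁ : ∀ π, ξ₁ π = fun ω => π * β + (σ₁₂ / σ₂) * Z₂ ω
        + Real.sqrt (σ₁ ^ 2 - σ₁₂ ^ 2 / σ₂ ^ 2) * Z₁ ω)
    (ε : ℝ) (hε : 0 < ε) :
    Tendsto (fun π : ℝ =>
        P {ω | ε ≤ |π * ((millsTau σ₂ (ξ₂ π ω) * (ξ₁ π ω - (σ₁₂ / σ₂ ^ 2) * ξ₂ π ω)
            + σ₁₂ / σ₂ ^ 2) - ξ₁ π ω / ξ₂ π ω)|})
      atTop (nhds 0) := by
  set c := σ₁₂ / σ₂ ^ 2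
  set s := Real.sqrt (σ₁ ^ 2 - σ₁₂ ^ 2 / σ₂ ^ 2)
  refine tendsto_measure_le_abs_of_ae_tendsto (fun π => ?_) (ae_of_all _ fun ω => ?_) hε
  · simp only [hξ₁, hξ₂]
    exact Measurable.aestronglyMeasurable (by fun_prop)
  · have hc : c * σ₂ = σ₁₂ / σ₂ := by simp only [c]; field_simp
    have hlim := (tendsto_mul_millsTau_sub_inv hσ₂ (σ₂ * Z₂ ω) (β - c)
      (s * Z₁ ω - (β - c) * (σ₂ * Z₂ ω))).comp
      (tendsto_atTop_add_const_right atTop (σ₂ * Z₂ ω) tendsto_id)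
    refine hlim.congr' ?_
    filter_upwards [eventually_ne_atTop (-(σ₂ * Z₂ ω))] with π hπ
    have hx : π + σ₂ * Z₂ ω ≠ 0 := fun h => hπ (by linarith)
    simp only [Function.comp_apply, id, hξ₁, hξ₂]
    rw [mul_sub_add_sub_div_eq c hx]
    linear_combination π * (millsTau σ₂ (π + σ₂ * Z₂ ω) - (π + σ₂ * Z₂ ω)⁻¹) * Z₂ ω * hc

/-- π·(β̂_U − β̂_2SLS) → 0 in probability as π → ∞. -/
theorem stmt9 {Ω : Type*} [MeasurableSpace Ω] (P : Measure Ω) [IsProbabilityMeasure P]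
    (Z₁ Z₂ : Ω → ℝ) (hm₁ : Measurable Z₁) (hm₂ : Measurable Z₂)
    (hind : IndepFun Z₁ Z₂ P)
    (hZ₁ : P.map Z₁ = gaussianReal 0 1) (hZ₂ : P.map Z₂ = gaussianReal 0 1)
    (β σ₁ σ₁₂ σ₂ : ℝ) (hσ₂ : 0 < σ₂)
    (hpd : σ₁₂ ^ 2 < σ₁ ^ 2 * σ₂ ^ 2)
    (ξ₁ : ℝ → Ω → ℝ) (ξ₂ : ℝ → Ω → ℝ)
    (hξ₂ : ∀ π, ξ₂ π = fun ω => π + σ₂ * Z₂ ω)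
    (hξ₁ : ∀ π, ξ₁ π = fun ω => π * β + (σ₁₂ / σ₂) * Z₂ ω
        + Real.sqrt (σ₁ ^ 2 - σ₁₂ ^ 2 / σ₂ ^ 2) * Z₁ ω)
    (ε : ℝ) (hε : 0 < ε) :
    Tendsto (fun π : ℝ =>
        P {ω | ε ≤ |π * ((millsTau σ₂ (ξ₂ π ω) * (ξ₁ π ω - (σ₁₂ / σ₂ ^ 2) * ξ₂ π ω)
            + σ₁₂ / σ₂ ^ 2) - ξ₁ π ω / ξ₂ π ω)|})
      atTop (nhds 0) :=
  stmt9_general P Z₁ Z₂ hm₁ hm₂ β σ₁ σ₁₂ σ₂ hσ₂ ξ₁ ξ₂ hξ₂ hξ₁ ε hε
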